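/- The addition formula for s: for all z, w ∈ ℂ, s(z+w) = c(z)s(w) + s(z)c(w) + d(z)d(w). -/
import Mathlib


open Complex

noncomputable def ζ₁ : ℂ := 1
noncomputable def ζ₂ : ℂ := (-1 + Complex.I * Real.sqrt 3) / 2
noncomputable def ζ₃ : ℂ := (-1 - Complex.I * Real.sqrt 3) / 2

noncomputable def c (z : ℂ) : ℂ :=
  (Complex.exp (z * ζ₁) + Complex.exp (z * ζ₂) + Complex.exp (z * ζ₃)) / 3
noncomputable def s (z : ℂ) : ℂ :=
  (ζ₁⁻¹ * Complex.exp (z * ζ₁) + ζ₂⁻¹ * Complex.exp (z * ζ₂) + ζ₃⁻¹ * Complex.exp (z * ζ₃)) / 3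
noncomputable def d (z : ℂ) : ℂ :=
  (ζ₁⁻¹ ^ 2 * Complex.exp (z * ζ₁) + ζ₂⁻¹ ^ 2 * Complex.exp (z * ζ₂) + ζ₃⁻¹ ^ 2 * Complex.exp (z * ζ₃)) / 3

lemma sq3 : (Real.sqrt 3 : ℂ) ^ 2 = 3 := by
  norm_cast
  rw [Real.sq_sqrt]; norm_num

lemma mul23 : ζ₂ * ζ₃ = 1 := by
  unfold ζ₂ ζ₃
  linear_combination (-(Complex.I ^ 2) / 4) * sq3 - (3 / 4 : ℂ) * Complex.I_sq

lemma inv2 : ζ₂⁻¹ = ζ₃ := inv_eq_of_mul_eq_one_right mul23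

lemma inv3 : ζ₃⁻¹ = ζ₂ := inv_eq_of_mul_eq_one_right (by rw [mul_comm]; exact mul23)

lemma hy : ζ₃ = -1 - ζ₂ := by unfold ζ₂ ζ₃; ring

lemma hmin : ζ₂ ^ 2 + ζ₂ + 1 = 0 := by
  unfold ζ₂
  linear_combination (Complex.I ^ 2 / 4) * sq3 + (3 / 4 : ℂ) * Complex.I_sq

theorem addition_s (z w : ℂ) :
    s (z + w) = c z * s w + s z * c w + d z * d w := by
  simp only [s, c, d, ζ₁, inv_one, one_pow, one_mul, mul_one, inv2, inv3, add_mul,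
    Complex.exp_add]
  rw [hy]
  set x := ζ₂ with hx
  set e1 := Complex.exp z
  set f1 := Complex.exp w
  set e2 := Complex.exp (z * x)
  set f2 := Complex.exp (w * x)
  set e3 := Complex.exp (z * (-1 - x))
  set f3 := Complex.exp (w * (-1 - x))
  linear_combination
    ((1/9 : ℂ) * e3 * f2 - (1/9 : ℂ) * e3 * f1 + (1/9 : ℂ) * e2 * f3 - (2/9 : ℂ) * e2 * f2
      - (1/9 : ℂ) * e2 * f1 - (1/9 : ℂ) * e1 * f3 - (1/9 : ℂ) * e1 * f2
      + (1/9 : ℂ) * x * e3 * f3 - (1/9 : ℂ) * x * e3 * f2 - (1/9 : ℂ) * x * e2 * f3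
      - (1/3 : ℂ) * x * e2 * f2 - (1/9 : ℂ) * x^2 * e3 * f3 - (1/9 : ℂ) * x^2 * e3 * f2
      - (1/9 : ℂ) * x^2 * e2 * f3 - (1/9 : ℂ) * x^2 * e2 * f2) * hmin
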